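/- Let G be a finite simple graph with vertex set U. Let (X_v)_{v ∈ U} be independent random bits, each equal to 1 with probability 1/2, and independently let ≺ be a uniformly random linear order on U. Let A = { v ∈ U : X_v = 1 }, and let M be the lexicographically first maximal independent set of the induced subgraph G[A] with respect to ≺, i.e., the unique M ⊆ A such that for every v ∈ A: v ∈ M if and only if every neighbor w of v with w ∈ A and v ≺ w satisfies w ∉ M. Let R = { v ∈ U : X_v = 0, v has no neighbor in M, and v has some neighbor w with w ∉ M and w has no neighbor in M }. Then E[|R|] ≤ |U| / 4. -/

import Mathlib

/-!
Fix a vertex `v` and the order. If `v ∈ R`, then `v` has a neighbour `w` with bit `0` none of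
whose neighbours lies in `M`. Switching the bit of `w` on adds exactly `w` to `M`, since the
lexicographically first MIS is the unique solution of its fixed-point equations; so `v` acquires
a neighbour in `M` and leaves `R`. This switch is injective (`w` is recovered as the unique
neighbour of `v` in the new `M`) and keeps the bit of `v` equal to `0`. Hence the event `v ∈ R`
and its image are disjoint inside the event `X_v = 0` of probability `1/2`, so
`P(v ∈ R) ≤ 1/4`; summing over `v` gives the bound.
-/

open Finset

namespace Finset

theorem two_mul_card_le_of_injOn {α : Type*} [DecidableEq α] {s t : Finset α} {f : α → α}
    (hs : s ⊆ t) (hf : Set.MapsTo f s t) (hinj : Set.InjOn f s) (hdisj : ∀ a ∈ s, f a ∉ s) :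
    2 * #s ≤ #t := by
  have hdisj' : Disjoint s (s.image f) := disjoint_left.2 fun _ ha hfa => by
    obtain ⟨a, ha', rfl⟩ := mem_image.1 hfa
    exact hdisj a ha' ha
  calc 2 * #s = #(s ∪ s.image f) := by
        rw [card_union_of_disjoint hdisj', card_image_of_injOn hinj, two_mul]
    _ ≤ #t := card_le_card (union_subset hs (image_subset_iff.2 hf))

end Finset

theorem two_mul_card_filter_fst_apply_eq_false {V α : Type*} [Fintype V] [DecidableEq V]
    [Fintype α] (v : V) :
    2 * #{p : (V → Bool) × α | p.1 v = false} = Fintype.card ((V → Bool) × α) := by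
  let flip : (V → Bool) × α → (V → Bool) × α :=
    fun p => (Function.update p.1 v (!p.1 v), p.2)
  have hflip : ∀ p, flip (flip p) = p := fun p => by simp [flip]
  have hsame :
      #{p : (V → Bool) × α | p.1 v = false} = #{p : (V → Bool) × α | ¬p.1 v = false} :=
    card_nbij' flip flip (fun p => by simp [flip]) (fun p => by simp [flip])
      (fun p _ => hflip p) (fun p _ => hflip p)
  rw [two_mul]
  nth_rw 2 [hsame]
  exact (card_filter_add_card_filter_not _).trans card_univ

namespace SimpleGraph

variable {V : Type*} [LinearOrder V] (G : SimpleGraph V)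

def IsLexFirstMIS (b : V → Bool) (π : Equiv.Perm V) (S : Set V) : Prop :=
  (∀ v ∈ S, b v = true) ∧
    ∀ v, b v = true → (v ∈ S ↔ ∀ w, G.Adj v w → b w = true → π v < π w → w ∉ S)

variable {G} {b : V → Bool} {π : Equiv.Perm V} {S T : Set V}

theorem IsLexFirstMIS.unique [Finite V] (hS : G.IsLexFirstMIS b π S)
    (hT : G.IsLexFirstMIS b π T) : S = T := by
  ext v
  induction hv : π v using WellFoundedGT.induction generalizing v with
  | _ t ih =>
    subst hv
    by_cases hb : b v = true
    · rw [hS.2 v hb, hT.2 v hb]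
      exact forall_congr' fun w => imp_congr_right fun _ => imp_congr_right fun _ =>
        forall_congr' fun hvw => not_congr (ih _ hvw w rfl)
    · exact iff_of_false (fun h => hb (hS.1 v h)) (fun h => hb (hT.1 v h))

theorem IsLexFirstMIS.mem_of_forall_adj_notMem (hS : G.IsLexFirstMIS b π S) {v : V}
    (hbv : b v = true) (hv : ∀ w, G.Adj v w → w ∉ S) : v ∈ S :=
  (hS.2 v hbv).2 fun w hw _ _ => hv w hw

theorem IsLexFirstMIS.insert (hS : G.IsLexFirstMIS b π S) {w : V} (hbw : b w = false)
    (hw : ∀ u, G.Adj w u → u ∉ S) :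
    G.IsLexFirstMIS (Function.update b w true) π (insert w S) := by
  refine ⟨?_, fun v hv => ?_⟩
  · rintro v (rfl | hv)
    · simp
    · have hvw : v ≠ w := by rintro rfl; simp [hS.1 v hv] at hbw
      simpa [hvw] using hS.1 v hv
  obtain rfl | hvw := eq_or_ne v w
  · exact iff_of_true (Set.mem_insert v S) fun u hu _ _ => by
      rintro (rfl | huS)
      exacts [G.irrefl hu, hw u hu huS]
  have hbv : b v = true := by simpa [hvw] using hv
  rw [Set.mem_insert_iff, or_iff_right hvw]
  constructor
  · intro hvS u hu _ hlt
    rintro (rfl | huS)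
    · exact hw v hu.symm hvS
    · exact (hS.2 v hbv).1 hvS u hu (hS.1 u huS) hlt huS
  · intro h
    refine (hS.2 v hbv).2 fun u hu hbu hlt huS => h u hu ?_ hlt (Or.inr huS)
    simp [Function.update_apply, hbu]

theorem IsLexFirstMIS.update_true_eq_insert [Finite V] {M : (V → Bool) → Equiv.Perm V → Set V}
    (hM : ∀ b π, G.IsLexFirstMIS b π (M b π)) {w : V} (hbw : b w = false)
    (hw : ∀ u, G.Adj w u → u ∉ M b π) :
    M (Function.update b w true) π = Insert.insert w (M b π) :=
  (hM _ _).unique ((hM b π).insert hbw hw)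

section Pruning

variable {M R : (V → Bool) → Equiv.Perm V → Set V}

theorem exists_adj_eq_false_of_mem (hM : ∀ b π, G.IsLexFirstMIS b π (M b π))
    (hR : ∀ b π, ∀ v ∈ R b π, b v = false ∧ (∀ w, G.Adj v w → w ∉ M b π) ∧
      ∃ w, G.Adj v w ∧ w ∉ M b π ∧ ∀ u, G.Adj w u → u ∉ M b π)
    {v : V} (hv : v ∈ R b π) :
    ∃ w, G.Adj v w ∧ b w = false ∧ ∀ u, G.Adj w u → u ∉ M b π := by
  obtain ⟨-, -, w, hvw, hwM, hw⟩ := hR b π v hv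
  refine ⟨w, hvw, ?_, hw⟩
  by_contra hbw
  exact hwM ((hM b π).mem_of_forall_adj_notMem (by simpa using hbw) hw)

open Classical in
theorem four_mul_card_filter_mem_le [Fintype V] (hM : ∀ b π, G.IsLexFirstMIS b π (M b π))
    (hR : ∀ b π, ∀ v ∈ R b π, b v = false ∧ (∀ w, G.Adj v w → w ∉ M b π) ∧
      ∃ w, G.Adj v w ∧ w ∉ M b π ∧ ∀ u, G.Adj w u → u ∉ M b π)
    (v : V) :
    4 * #{p : (V → Bool) × Equiv.Perm V | v ∈ R p.1 p.2} ≤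
      Fintype.card ((V → Bool) × Equiv.Perm V) := by
  set E := ({p : (V → Bool) × Equiv.Perm V | v ∈ R p.1 p.2} : Finset _)
  have hE : ∀ p, p ∈ E ↔ v ∈ R p.1 p.2 := fun p => mem_filter_univ p
  set S := ({p : (V → Bool) × Equiv.Perm V | p.1 v = false} : Finset _)
  have hS : ∀ p, p ∈ S ↔ p.1 v = false := fun p => mem_filter_univ p
  have : Nonempty V := ⟨v⟩
  choose! w hvw hbw hw using fun p : (V → Bool) × Equiv.Perm V =>
    exists_adj_eq_false_of_mem hM hR (b := p.1) (π := p.2) (v := v)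
  let f : (V → Bool) × Equiv.Perm V → (V → Bool) × Equiv.Perm V :=
    fun p => (Function.update p.1 (w p) true, p.2)
  have hMf : ∀ p ∈ E, M (f p).1 (f p).2 = Insert.insert (w p) (M p.1 p.2) := fun p hp =>
    IsLexFirstMIS.update_true_eq_insert hM (hbw p ((hE p).1 hp)) (hw p ((hE p).1 hp))
  have hsub : E ⊆ S := fun p hp => (hS p).2 (hR _ _ v ((hE p).1 hp)).1
  have hmaps : Set.MapsTo f E S := fun p hp => by
    have hp := (hE p).1 hp
    simpa [hS, f, (hvw p hp).ne] using (hR p.1 p.2 v hp).1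
  have hinj : Set.InjOn f E := by
    intro p hp q hq hpq
    have hwpq : w p = w q := by
      have hwp : w p ∈ M (f q).1 (f q).2 := hpq ▸ (hMf p hp).symm ▸ Set.mem_insert (w p) _
      rw [hMf q hq] at hwp
      exact hwp.resolve_right ((hR q.1 q.2 v ((hE q).1 hq)).2.1 _ (hvw p ((hE p).1 hp)))
    have hrecover : ∀ r ∈ E, r.1 = Function.update (f r).1 (w r) false := by
      intro r hr
      rw [Function.update_idem, ← hbw r ((hE r).1 hr), Function.update_eq_self]
    exact Prod.ext (by rw [hrecover p hp, hrecover q hq, hpq, hwpq])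
      (by simpa [f] using congrArg Prod.snd hpq)
  have hdisj : ∀ p ∈ E, f p ∉ E := fun p hp hfp =>
    (hR _ _ v ((hE _).1 hfp)).2.1 (w p) (hvw p ((hE p).1 hp)) (by simp [hMf p hp])
  calc 4 * #E = 2 * (2 * #E) := by ring
    _ ≤ 2 * #S := by
      gcongr
      exact two_mul_card_le_of_injOn hsub hmaps hinj hdisj
    _ = Fintype.card ((V → Bool) × Equiv.Perm V) := two_mul_card_filter_fst_apply_eq_false v

end Pruning

end SimpleGraph

/-- **Pruning Lemma, Lemma 4.3.**
Randomness is modeled by the uniform distribution on pairs `(b, π)` where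
`b : V → Bool` is the vector of independent uniform bits and `π` is a uniformly random
permutation of `V` (the random linear order `≺` is `v ≺ w ↔ π v < π w`, which is a
uniformly random linear order, independent of the bits).
`A = {v | b v = 1}`; `M b π` is the lexicographically first maximal independent set of
the induced subgraph `G[A]` w.r.t. `≺`; and `R b π` is the set of vertices `v` with
`b v = 0`, no neighbor in `M`, and some neighbor `w` with `w ∉ M` having no neighbor
in `M`.  Then `E[|R|] ≤ |U| / 4`. -/
theorem pruning_lemma {V : Type*} [Fintype V] [LinearOrder V]
    (G : SimpleGraph V)
    (M : (V → Bool) → Equiv.Perm V → Set V)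
    (hMsub : ∀ b π, ∀ v ∈ M b π, b v = true)
    (hMfix : ∀ b π, ∀ v : V, b v = true →
      (v ∈ M b π ↔ ∀ w : V, G.Adj v w → b w = true → π v < π w → w ∉ M b π))
    (R : (V → Bool) → Equiv.Perm V → Set V)
    (hR : ∀ b π, ∀ v : V, v ∈ R b π ↔
      (b v = false ∧ (∀ w, G.Adj v w → w ∉ M b π) ∧
        ∃ w, G.Adj v w ∧ w ∉ M b π ∧ ∀ u, G.Adj w u → u ∉ M b π)) :
    (∑ p : (V → Bool) × Equiv.Perm V, ((R p.1 p.2).ncard : ℝ))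
      / (Fintype.card ((V → Bool) × Equiv.Perm V) : ℝ)
      ≤ (Fintype.card V : ℝ) / 4 := by
  classical
  have hM : ∀ b π, G.IsLexFirstMIS b π (M b π) := fun b π => ⟨hMsub b π, hMfix b π⟩
  have hdouble : ∑ p : (V → Bool) × Equiv.Perm V, (R p.1 p.2).ncard =
      ∑ v, #{p : (V → Bool) × Equiv.Perm V | v ∈ R p.1 p.2} := by
    simp_rw [Set.ncard_eq_toFinset_card', ← Set.filter_mem_univ_eq_toFinset]
    exact sum_card_bipartiteAbove_eq_sum_card_bipartiteBelow
      (r := fun (p : (V → Bool) × Equiv.Perm V) v => v ∈ R p.1 p.2)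
  have hbound : (∑ p : (V → Bool) × Equiv.Perm V, (R p.1 p.2).ncard) * 4 ≤
      Fintype.card V * Fintype.card ((V → Bool) × Equiv.Perm V) := by
    rw [hdouble, sum_mul]
    refine (sum_le_card_nsmul _ _ _ fun v _ => ?_).trans_eq (smul_eq_mul ..)
    rw [mul_comm]
    exact G.four_mul_card_filter_mem_le hM (fun b π v hv => (hR b π v).1 hv) v
  rw [div_le_div_iff₀ (by positivity) four_pos]
  exact_mod_cast hbound
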